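/- The relation on suffixes of the collection defined by the conditions of the two comparison lemmas (comparison by insert point first, then by (length, side-indicator, mismatch character) as specified) is a strict partial order, and the lexicographic order on suffixes is a refinement of it: whenever the partial order declares S_d[i..] below S_{d′}[i′..], also S_d[i..] < S_{d′}[i′..] lexicographically. -/

import Mathlib

/-!
The extended factor `U ++ [c]` of a suffix does not occur in `R`, so it lies strictly between
two consecutive suffixes of the sorted suffix array of `R`; the insert point and the side
indicator say which gap. Each tie-breaking condition of `Prec` therefore forces the extended
factors into lexicographic order, and since neither extended factor is a prefix of the other,
the suffixes compare the same way. All the prefix reasoning rests on one convexity fact: a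
common prefix of `X ≤ Z` is a prefix of every `Y` with `X ≤ Y ≤ Z`.

That `Prec` is a strict partial order holds because it is the pullback of the lexicographic
order along the key `(ip, side, ±ℓ, c)`.
-/

open List

/-- `MFactor R SA suf U c ip`: `U` is the matching factor of the suffix `suf`
w.r.t. `R` (the longest prefix of `suf` occurring in `R`), `c` is the mismatch
character (the character of `suf` following `U`), and `ip` is the insert point
of `suf` in the suffix array `SA` of `R`: the greatest rank `j` such that `U`
occurs at `SA j` and `R[SA j..] < Uc`, if such a rank exists, and otherwise
the least rank `j` such that `U` occurs at `SA j`. -/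
def MFactor {α : Type*} [LinearOrder α] (R : List α) (SA : ℕ → ℕ)
    (suf U : List α) (c : α) (ip : ℕ) : Prop :=
  (∃ V, suf = U ++ c :: V) ∧ U <:+: R ∧ ¬ ((U ++ [c]) <:+: R) ∧
  (IsGreatest {j | j < R.length ∧ U <+: R.drop (SA j) ∧
      List.Lex (· < ·) (R.drop (SA j)) (U ++ [c])} ip ∨
   ((∀ j, j < R.length → U <+: R.drop (SA j) →
      ¬ List.Lex (· < ·) (R.drop (SA j)) (U ++ [c])) ∧
    IsLeast {j | j < R.length ∧ U <+: R.drop (SA j)} ip))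

/-- The comparison relation of the two lemmas: first by insert point, then
(at equal insert points) by the four tie-breaking conditions on
(matching-factor length, side indicator, mismatch character). -/
def Prec {α : Type*} [LinearOrder α] {ι : Type*}
    (U : ι → List α) (c : ι → α) (ip : ι → ℕ) (xS : ι → Prop) (a b : ι) : Prop :=
  ip a < ip b ∨
  (ip a = ip b ∧
    (((U a).length < (U b).length ∧ xS a) ∨
     ((U b).length < (U a).length ∧ ¬ xS b) ∨
     ((U a).length = (U b).length ∧ xS a ∧ ¬ xS b) ∨
     ((U a).length = (U b).length ∧ (xS a ↔ xS b) ∧ c a < c b)))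

section ListOrder

variable {α : Type*} [LinearOrder α]

theorem List.cons_le_cons_iff' {a b : α} {l l' : List α} :
    a :: l ≤ b :: l' ↔ a < b ∨ a = b ∧ l ≤ l' := by
  simp only [le_iff_eq_or_lt (α := List α), cons.injEq, cons_lt_cons_iff]
  tauto

-- Core's `IsPrefix.le` concludes with core's `List.le`, not with Mathlib's order on lists.
theorem List.IsPrefix.le' {X Y : List α} (h : X <+: Y) : X ≤ Y := not_lt.mp h.le

theorem List.IsPrefix.of_le_of_le {P X Y Z : List α} (hX : P <+: X) (hZ : P <+: Z)
    (hXY : X ≤ Y) (hYZ : Y ≤ Z) : P <+: Y := by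
  induction P generalizing X Y Z with
  | nil => exact nil_prefix
  | cons p P ih =>
    obtain ⟨X, rfl, hPX⟩ := cons_prefix_iff.mp hX
    obtain ⟨Z, rfl, hPZ⟩ := cons_prefix_iff.mp hZ
    obtain _ | ⟨y, Y⟩ := Y
    · exact absurd hXY (not_le.mpr (nil_lt_cons _ _))
    rw [List.cons_le_cons_iff'] at hXY hYZ
    have hyp : y ≤ p := hYZ.elim le_of_lt fun h => h.1.le
    obtain ⟨rfl, hXY'⟩ := hXY.resolve_left hyp.not_gt
    exact cons_prefix_cons.mpr ⟨rfl, ih hPX hPZ hXY' (hYZ.resolve_left (lt_irrefl p)).2⟩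

theorem List.append_lt_append_of_lt_of_not_prefix {X Y : List α} (u v : List α) (h : X < Y)
    (hXY : ¬ X <+: Y) : X ++ u < Y ++ v := by
  by_contra! hle
  exact hXY ((prefix_refl X).of_le_of_le (prefix_append X u) h.le
    ((prefix_append Y v).le'.trans hle))

end ListOrder

namespace MFactor

variable {α : Type*} [LinearOrder α] {R : List α} {SA : ℕ → ℕ} {suf sa sb U Ua Ub : List α}
  {c ca cb : α} {ip ia ib j : ℕ}

theorem isInfix (h : MFactor R SA suf U c ip) : U <:+: R := h.2.1

theorem drop_ne (h : MFactor R SA suf U c ip) (t : ℕ) : R.drop t ≠ U ++ [c] :=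
  fun he => h.2.2.1 (he ▸ (drop_suffix t R).isInfix)

theorem prefix_of_prefix_concat (h : MFactor R SA suf U c ip) {V : List α} (hV : V <:+: R)
    (hVU : V <+: U ++ [c]) : V <+: U :=
  (prefix_concat_iff.mp hVU).resolve_left fun he => h.2.2.1 (he ▸ hV)

theorem ip_lt_length (h : MFactor R SA suf U c ip) : ip < R.length := by
  rcases h.2.2.2 with hG | ⟨-, hL⟩
  exacts [hG.1.1, hL.1.1]

theorem prefix_drop (h : MFactor R SA suf U c ip) : U <+: R.drop (SA ip) := by
  rcases h.2.2.2 with hG | ⟨-, hL⟩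
  exacts [hG.1.2.1, hL.1.2]

theorem drop_lt_of_not_lt (h : MFactor R SA suf U c ip) (hE : ¬ U ++ [c] < R.drop (SA ip)) :
    R.drop (SA ip) < U ++ [c] :=
  lt_of_le_of_ne (not_lt.mp hE) (h.drop_ne _)

theorem not_prefix_drop_of_lt (h : MFactor R SA suf U c ip) (hE : U ++ [c] < R.drop (SA ip))
    (hj : j < ip) : ¬ U <+: R.drop (SA j) := by
  rcases h.2.2.2 with hG | ⟨-, hL⟩
  · exact absurd hG.1.2.2 hE.not_gt
  · exact fun hU => (hL.2 ⟨hj.trans hL.1.1, hU⟩).not_gt hj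

theorem lt_drop_of_ip_lt
    (hsort : ∀ r r', r < r' → r' < R.length → R.drop (SA r) < R.drop (SA r'))
    (h : MFactor R SA suf U c ip) (hj : ip < j) (hjn : j < R.length) :
    U ++ [c] < R.drop (SA j) := by
  by_contra! hle
  have hU : U <+: R.drop (SA j) :=
    h.prefix_drop.of_le_of_le (prefix_append U [c]) (hsort ip j hj hjn).le hle
  have hlt : R.drop (SA j) < U ++ [c] := lt_of_le_of_ne hle (h.drop_ne _)
  rcases h.2.2.2 with hG | ⟨hnone, -⟩
  · exact (hG.2 ⟨hjn, hU, hlt⟩).not_gt hj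
  · exact hnone j hjn hU hlt

theorem not_concat_prefix_of_lt (ha : MFactor R SA sa Ua ca ia) (hb : MFactor R SA sb Ub cb ib)
    (h : Ua ++ [ca] < Ub ++ [cb]) : ¬ Ua ++ [ca] <+: Ub ++ [cb] := fun hp =>
  (prefix_concat_iff.mp hp).elim (fun he => (he ▸ h).false)
    fun hU => ha.2.2.1 (hU.isInfix.trans hb.isInfix)

theorem lt_of_concat_lt (ha : MFactor R SA sa Ua ca ia) (hb : MFactor R SA sb Ub cb ib)
    (h : Ua ++ [ca] < Ub ++ [cb]) : sa < sb := by
  obtain ⟨Va, rfl⟩ := ha.1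
  obtain ⟨Vb, rfl⟩ := hb.1
  rw [append_cons, append_cons Ub]
  exact append_lt_append_of_lt_of_not_prefix Va Vb h (ha.not_concat_prefix_of_lt hb h)

theorem concat_lt_of_ip_lt
    (hsort : ∀ r r', r < r' → r' < R.length → R.drop (SA r) < R.drop (SA r'))
    (ha : MFactor R SA sa Ua ca ia) (hb : MFactor R SA sb Ub cb ib) (hlt : ia < ib) :
    Ua ++ [ca] < Ub ++ [cb] := by
  have haW := ha.lt_drop_of_ip_lt hsort hlt hb.ip_lt_length
  by_cases hbW : Ub ++ [cb] < R.drop (SA ib)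
  · by_contra! hle
    -- `Ub ++ [cb] ≤ Ua ++ [ca] < R[SA ib..]` squeezes `Ub` into a prefix of `Ua`, hence of
    -- `R[SA ia..]`, against the minimality of `ib`.
    have hUb : Ub <+: Ua :=
      ha.prefix_of_prefix_concat hb.isInfix
        ((prefix_append Ub [cb]).of_le_of_le hb.prefix_drop hle haW.le)
    exact hb.not_prefix_drop_of_lt hbW hlt (hUb.trans ha.prefix_drop)
  · exact haW.trans (hb.drop_lt_of_not_lt hbW)

end MFactor

open Classical in
/-- On the left of the insert-point suffix (`xS`) a longer matching factor lies closer to it,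
on the right farther away; hence the sign of the length. -/
noncomputable def precKey {α : Type*} [LinearOrder α] {ι : Type*} (U : ι → List α) (c : ι → α)
    (ip : ι → ℕ) (xS : ι → Prop) (a : ι) : ℕ ×ₗ Bool ×ₗ ℤ ×ₗ α :=
  toLex (ip a, toLex (!decide (xS a),
    toLex (if xS a then ((U a).length : ℤ) else -(U a).length, c a)))

theorem prec_iff_precKey_lt {α : Type*} [LinearOrder α] {ι : Type*} (U : ι → List α)
    (c : ι → α) (ip : ι → ℕ) (xS : ι → Prop) (a b : ι) :
    Prec U c ip xS a b ↔ precKey U c ip xS a < precKey U c ip xS b := by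
  unfold Prec precKey
  simp only [Prod.Lex.toLex_lt_toLex]
  by_cases ha : xS a <;> by_cases hb : xS b <;> simp [ha, hb]
  omega

theorem concat_lt_of_prec {α : Type*} [LinearOrder α] {ι : Type*} {R : List α} {SA : ℕ → ℕ}
    (hsort : ∀ r r', r < r' → r' < R.length → R.drop (SA r) < R.drop (SA r'))
    {suf U : ι → List α} {c : ι → α} {ip : ι → ℕ} {xS : ι → Prop}
    (hmf : ∀ a, MFactor R SA (suf a) (U a) (c a) (ip a))
    (hx : ∀ a, xS a ↔ U a ++ [c a] < R.drop (SA (ip a))) {a b : ι}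
    (h : Prec U c ip xS a b) : U a ++ [c a] < U b ++ [c b] := by
  rcases h with hlt | ⟨heq, htie⟩
  · exact (hmf a).concat_lt_of_ip_lt hsort (hmf b) hlt
  have hUa := (hmf a).prefix_drop
  have hUb := (hmf b).prefix_drop
  rw [heq] at hUa
  simp only [hx, heq] at htie
  rcases htie with ⟨hlen, haW⟩ | ⟨hlen, hbW⟩ | ⟨-, haW, hbW⟩ | ⟨hlen, -, hc⟩
  · by_contra! hle
    have hU : U b <+: U a := (hmf a).prefix_of_prefix_concat (hmf b).isInfix
      ((prefix_append _ _).of_le_of_le hUb hle haW.le)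
    exact hlen.not_ge hU.length_le
  · have hWb := (hmf b).drop_lt_of_not_lt hbW
    by_contra! hle
    have hU : U a <+: U b := (hmf b).prefix_of_prefix_concat (hmf a).isInfix
      (hUa.of_le_of_le (prefix_append _ _) hWb.le hle)
    exact hlen.not_ge hU.length_le
  · exact haW.trans ((hmf b).drop_lt_of_not_lt hbW)
  · have hU : U a = U b := (prefix_of_prefix_length_le hUa hUb hlen.le).eq_of_length hlen
    rw [hU]
    exact append_left_lt (Lex.rel hc)

theorem stmt15_general {α : Type*} [LinearOrder α] {ι : Type*} (R : List α) (SA : ℕ → ℕ)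
    (hsort : ∀ r r', r < r' → r' < R.length →
      List.Lex (· < ·) (R.drop (SA r)) (R.drop (SA r')))
    (suf : ι → List α) (U : ι → List α) (c : ι → α) (ip : ι → ℕ) (xS : ι → Prop)
    (hmf : ∀ a, MFactor R SA (suf a) (U a) (c a) (ip a))
    (hx : ∀ a, xS a ↔ List.Lex (· < ·) (U a ++ [c a]) (R.drop (SA (ip a)))) :
    (∀ a, ¬ Prec U c ip xS a a) ∧
    (∀ a b d, Prec U c ip xS a b → Prec U c ip xS b d → Prec U c ip xS a d) ∧
    (∀ a b, Prec U c ip xS a b → List.Lex (· < ·) (suf a) (suf b)) := by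
  have hkey := prec_iff_precKey_lt U c ip xS
  refine ⟨fun a h => lt_irrefl _ ((hkey a a).1 h), fun a b d hab hbd => ?_, fun a b hab => ?_⟩
  · exact (hkey a d).2 (((hkey a b).1 hab).trans ((hkey b d).1 hbd))
  · exact (hmf a).lt_of_concat_lt (hmf b) (concat_lt_of_prec hsort hmf hx hab)

/-- The relation `Prec` is a strict partial order on the suffixes of the
collection, and the lexicographic order refines it. -/
theorem stmt15 {α : Type*} [LinearOrder α] {ι : Type*} (R : List α) (SA : ℕ → ℕ)
    (hbij : Set.BijOn SA (Set.Iio R.length) (Set.Iio R.length))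
    (hsort : ∀ r r', r < r' → r' < R.length →
      List.Lex (· < ·) (R.drop (SA r)) (R.drop (SA r')))
    (suf : ι → List α) (U : ι → List α) (c : ι → α) (ip : ι → ℕ) (xS : ι → Prop)
    (hmf : ∀ a, MFactor R SA (suf a) (U a) (c a) (ip a))
    (hx : ∀ a, xS a ↔ List.Lex (· < ·) (U a ++ [c a]) (R.drop (SA (ip a)))) :
    (∀ a, ¬ Prec U c ip xS a a) ∧
    (∀ a b d, Prec U c ip xS a b → Prec U c ip xS b d → Prec U c ip xS a d) ∧
    (∀ a b, Prec U c ip xS a b → List.Lex (· < ·) (suf a) (suf b)) :=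
  stmt15_general R SA hsort suf U c ip xS hmf hx
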